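/- arXiv:2204.12363 — 3 statements merged into one kernel-verified Lean document; each statement's English description precedes it below -/
import Mathlib

section
/- Backdoor adjustment for a confounded pair: let U be a finite random variable, Z = h(U) an observed confounder, X = f_X(Z, E_X) with E_X ⫫ U, and Y = f_Y(X, U, E_Y) with E_Y ⫫ (U, E_X). Then for any x and y, P(Y = y | do(X = x)) := P(f_Y(x, U, E_Y) = y) equals sum over z of P(Z = z) · P(Y = y | X = x, Z = z), provided P(X = x, Z = z) > 0 for all z with P(Z = z) > 0. -/
open Finset

/-!
`E_X` is independent of `(U, E_Y)`, so each joint probability that involves `X = x` factors as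
`P(X = x, Z = z, …) = P(Z = z, …) · c z` with `c z = P(f_X(z, E_X) = x)`. The factor `c z`
cancels in `P(Y = y | X = x, Z = z)`, which leaves `P(Z = z, f_Y(x, U, E_Y) = y) / P(Z = z)`;
summing over `z` marginalises the confounder out of the interventional probability.
-/

section FiniteSums

variable {α β γ ι : Type*} [Fintype α] [Fintype β] [Fintype γ] [Fintype ι]

theorem sum_sum_mul_mul_eq_of_sum_eq_one (p : α → ℝ) (r : γ → ℝ) (hr : ∑ c, r c = 1)
    (f : α → ℝ) : ∑ a, ∑ c, p a * r c * f a = ∑ a, p a * f a := by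
  refine sum_congr rfl fun a _ => ?_
  rw [← sum_mul, ← mul_sum, hr, mul_one]

theorem sum_sum_sum_mul_mul_mul_eq_mul (p : α → ℝ) (q : β → ℝ) (r : γ → ℝ)
    (m : α → γ → ℝ) (g : β → ℝ) :
    ∑ a, ∑ b, ∑ c, p a * q b * r c * (m a c * g b) =
      (∑ a, ∑ c, p a * r c * m a c) * ∑ b, q b * g b := by
  simp_rw [sum_mul, mul_sum]
  refine sum_congr rfl fun a _ => ?_
  rw [sum_comm]
  exact sum_congr rfl fun c _ => sum_congr rfl fun b _ => by ring

theorem sum_mul_mul_div_mul_mul_eq_sum (A B C : ι → ℝ) (hA : ∀ z, 0 ≤ A z)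
    (hB : ∀ z, A z = 0 → B z = 0) (hC : ∀ z, 0 < A z → 0 < A z * C z) :
    ∑ z, A z * (B z * C z / (A z * C z)) = ∑ z, B z := by
  refine sum_congr rfl fun z _ => ?_
  rcases (hA z).eq_or_lt with hA0 | hApos
  · rw [← hA0, hB z hA0.symm, zero_mul]
  · have hCpos : 0 < C z := pos_of_mul_pos_right (hC z hApos) hApos.le
    field_simp

end FiniteSums

section ConfoundedPair

variable {ΩU ΩEX ΩEY 𝒳 𝒵 𝒴 : Type*} [Fintype ΩU] [Fintype ΩEX] [Fintype ΩEY]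
  [DecidableEq 𝒵] [DecidableEq 𝒴]
  (pU : ΩU → ℝ) (pEX : ΩEX → ℝ) (pEY : ΩEY → ℝ)
  (h : ΩU → 𝒵) (fX : 𝒵 → ΩEX → 𝒳) (fY : 𝒳 → ΩU → ΩEY → 𝒴)

theorem prob_confounder_eq (hpEX1 : ∑ e, pEX e = 1) (hpEY1 : ∑ e, pEY e = 1) (z : 𝒵) :
    ∑ u, ∑ ex, ∑ ey, pU u * pEX ex * pEY ey * (if h u = z then (1 : ℝ) else 0) =
      ∑ u, pU u * (if h u = z then (1 : ℝ) else 0) := by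
  simpa only [mul_one, hpEX1, sum_sum_mul_mul_eq_of_sum_eq_one pU pEY hpEY1] using
    sum_sum_sum_mul_mul_mul_eq_mul pU pEX pEY (fun u _ => if h u = z then (1 : ℝ) else 0)
      (fun _ => 1)

theorem prob_treatment_confounder_eq [DecidableEq 𝒳] (hpEY1 : ∑ e, pEY e = 1) (x : 𝒳) (z : 𝒵) :
    ∑ u, ∑ ex, ∑ ey, pU u * pEX ex * pEY ey *
        (if fX (h u) ex = x ∧ h u = z then (1 : ℝ) else 0) =
      (∑ u, pU u * (if h u = z then (1 : ℝ) else 0)) *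
        ∑ ex, pEX ex * (if fX z ex = x then (1 : ℝ) else 0) := by
  have hsplit : ∀ u ex, (if fX (h u) ex = x ∧ h u = z then (1 : ℝ) else 0) =
      (if h u = z then 1 else 0) * (if fX z ex = x then 1 else 0) := by
    intro u ex
    by_cases hz : h u = z <;> simp [hz]
  simp only [hsplit]
  rw [sum_sum_sum_mul_mul_mul_eq_mul pU pEX pEY (fun u _ => if h u = z then 1 else 0),
    sum_sum_mul_mul_eq_of_sum_eq_one pU pEY hpEY1]

theorem prob_outcome_treatment_confounder_eq [DecidableEq 𝒳] (x : 𝒳) (y : 𝒴) (z : 𝒵) :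
    ∑ u, ∑ ex, ∑ ey, pU u * pEX ex * pEY ey *
        (if fX (h u) ex = x ∧ h u = z ∧ fY (fX (h u) ex) u ey = y then (1 : ℝ) else 0) =
      (∑ u, ∑ ey, pU u * pEY ey * (if h u = z ∧ fY x u ey = y then (1 : ℝ) else 0)) *
        ∑ ex, pEX ex * (if fX z ex = x then (1 : ℝ) else 0) := by
  have hsplit : ∀ u ex ey,
      (if fX (h u) ex = x ∧ h u = z ∧ fY (fX (h u) ex) u ey = y then (1 : ℝ) else 0) =
        (if h u = z ∧ fY x u ey = y then 1 else 0) * (if fX z ex = x then 1 else 0) := by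
    intro u ex ey
    by_cases hz : h u = z
    · subst hz
      by_cases hx : fX (h u) ex = x <;> simp [hx]
    · simp [hz]
  simp only [hsplit]
  exact sum_sum_sum_mul_mul_mul_eq_mul pU pEX pEY _ _

theorem sum_prob_outcome_confounder_eq [Fintype 𝒵] (x : 𝒳) (y : 𝒴) :
    ∑ z, ∑ u, ∑ ey, pU u * pEY ey * (if h u = z ∧ fY x u ey = y then (1 : ℝ) else 0) =
      ∑ u, ∑ ey, pU u * pEY ey * (if fY x u ey = y then (1 : ℝ) else 0) := by
  rw [sum_comm]
  refine sum_congr rfl fun u _ => ?_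
  rw [sum_comm]
  refine sum_congr rfl fun ey _ => ?_
  rw [← mul_sum]
  simp [ite_and]

theorem prob_outcome_confounder_eq_zero (hpU0 : ∀ u, 0 ≤ pU u) (x : 𝒳) (y : 𝒴) (z : 𝒵)
    (hz : ∑ u, pU u * (if h u = z then (1 : ℝ) else 0) = 0) :
    ∑ u, ∑ ey, pU u * pEY ey * (if h u = z ∧ fY x u ey = y then (1 : ℝ) else 0) = 0 := by
  have hterm := (sum_eq_zero_iff_of_nonneg fun u _ =>
    mul_nonneg (hpU0 u) (by positivity)).mp hz
  refine sum_eq_zero fun u hu => sum_eq_zero fun ey _ => ?_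
  by_cases hu' : h u = z
  · have hpU : pU u = 0 := by simpa [hu'] using hterm u hu
    simp [hpU]
  · simp [hu']

end ConfoundedPair

theorem stmt_5_general
    {ΩU ΩEX ΩEY 𝒳 𝒵 𝒴 : Type*} [Fintype ΩU] [Fintype ΩEX] [Fintype ΩEY] [Fintype 𝒵]
    [DecidableEq 𝒳] [DecidableEq 𝒵] [DecidableEq 𝒴]
    (pU : ΩU → ℝ) (pEX : ΩEX → ℝ) (pEY : ΩEY → ℝ)
    (h : ΩU → 𝒵) (fX : 𝒵 → ΩEX → 𝒳) (fY : 𝒳 → ΩU → ΩEY → 𝒴)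
    (hpU0 : ∀ u, 0 ≤ pU u)
    (hpEX1 : ∑ e, pEX e = 1)
    (hpEY1 : ∑ e, pEY e = 1)
    (x : 𝒳) (y : 𝒴)
    (Pz : 𝒵 → ℝ)
    (hPz : ∀ z, Pz z = ∑ u, ∑ ex, ∑ ey, pU u * pEX ex * pEY ey *
      (if h u = z then (1 : ℝ) else 0))
    (Pxz : 𝒳 → 𝒵 → ℝ)
    (hPxz : ∀ x' z, Pxz x' z = ∑ u, ∑ ex, ∑ ey, pU u * pEX ex * pEY ey *
      (if fX (h u) ex = x' ∧ h u = z then (1 : ℝ) else 0))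
    (Pyxz : 𝒴 → 𝒳 → 𝒵 → ℝ)
    (hPyxz : ∀ y' x' z, Pyxz y' x' z = ∑ u, ∑ ex, ∑ ey, pU u * pEX ex * pEY ey *
      (if fX (h u) ex = x' ∧ h u = z ∧ fY (fX (h u) ex) u ey = y'
        then (1 : ℝ) else 0))
    (hpos : ∀ z, 0 < Pz z → 0 < Pxz x z) :
    (∑ u, ∑ ey, pU u * pEY ey * (if fY x u ey = y then (1 : ℝ) else 0)) =
      ∑ z, Pz z * (Pyxz y x z / Pxz x z) := by
  have hPz' := fun z => (hPz z).trans (prob_confounder_eq pU pEX pEY h hpEX1 hpEY1 z)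
  have hPxz' := fun z =>
    (hPxz x z).trans (prob_treatment_confounder_eq pU pEX pEY h fX hpEY1 x z)
  simp only [hPz', hPxz', hPyxz, prob_outcome_treatment_confounder_eq]
  rw [sum_mul_mul_div_mul_mul_eq_sum, sum_prob_outcome_confounder_eq]
  · exact fun z => sum_nonneg fun u _ => mul_nonneg (hpU0 u) (by positivity)
  · exact prob_outcome_confounder_eq_zero pU pEY h fY hpU0 x y
  · simpa only [hPz', hPxz'] using hpos

/-- Backdoor adjustment for a confounded pair: with `Z = h(U)`,
`X = fX(Z, E_X)`, `Y = fY(X, U, E_Y)` and `U, E_X, E_Y` mutually independent,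
`P(Y = y | do(X = x)) = ∑ z, P(Z = z) · P(Y = y | X = x, Z = z)`,
provided `P(X = x, Z = z) > 0` for all `z` with `P(Z = z) > 0`. -/
theorem stmt_5
    {ΩU ΩEX ΩEY 𝒳 𝒵 𝒴 : Type*} [Fintype ΩU] [Fintype ΩEX] [Fintype ΩEY] [Fintype 𝒵]
    [DecidableEq 𝒳] [DecidableEq 𝒵] [DecidableEq 𝒴]
    (pU : ΩU → ℝ) (pEX : ΩEX → ℝ) (pEY : ΩEY → ℝ)
    (h : ΩU → 𝒵) (fX : 𝒵 → ΩEX → 𝒳) (fY : 𝒳 → ΩU → ΩEY → 𝒴)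
    (hpU0 : ∀ u, 0 ≤ pU u) (hpU1 : ∑ u, pU u = 1)
    (hpEX0 : ∀ e, 0 ≤ pEX e) (hpEX1 : ∑ e, pEX e = 1)
    (hpEY0 : ∀ e, 0 ≤ pEY e) (hpEY1 : ∑ e, pEY e = 1)
    (x : 𝒳) (y : 𝒴)
    (Pz : 𝒵 → ℝ)
    (hPz : ∀ z, Pz z = ∑ u, ∑ ex, ∑ ey, pU u * pEX ex * pEY ey *
      (if h u = z then (1 : ℝ) else 0))
    (Pxz : 𝒳 → 𝒵 → ℝ)
    (hPxz : ∀ x' z, Pxz x' z = ∑ u, ∑ ex, ∑ ey, pU u * pEX ex * pEY ey *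
      (if fX (h u) ex = x' ∧ h u = z then (1 : ℝ) else 0))
    (Pyxz : 𝒴 → 𝒳 → 𝒵 → ℝ)
    (hPyxz : ∀ y' x' z, Pyxz y' x' z = ∑ u, ∑ ex, ∑ ey, pU u * pEX ex * pEY ey *
      (if fX (h u) ex = x' ∧ h u = z ∧ fY (fX (h u) ex) u ey = y'
        then (1 : ℝ) else 0))
    (hpos : ∀ z, 0 < Pz z → 0 < Pxz x z) :
    (∑ u, ∑ ey, pU u * pEY ey * (if fY x u ey = y then (1 : ℝ) else 0)) =
      ∑ z, Pz z * (Pyxz y x z / Pxz x z) :=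
  stmt_5_general pU pEX pEY h fX fY hpU0 hpEX1 hpEY1 x y Pz hPz Pxz hPxz Pyxz hPyxz hpos
end

section
/- Front-door-style identification with a sufficient representation: suppose X = (Z, W) with Z the causal factor, the true labeling satisfies Y = f_Y(Z, U) with U ⫫ Z not necessarily independent of W, and the representation map ρ is injective on Z-values: ρ(z₁, w₁) ≠ ρ(z₂, w₂) whenever z₁ ≠ z₂ (so Z is recoverable from R = ρ(X)). If the predictor satisfies P̂(y | r, x' = (z', w')) = P(Y = y | Z = ζ(r), W = w') where ζ(r) is the unique z with ρ(z, ·) = r, and if W ⫫ Z (so the backdoor adjustment over W is valid), then sum over x' of P̂(y | ρ(x), x') P(x') = P(y | do(X = x)). -/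
open Finset

/-- Front-door-style identification with a sufficient representation.
`X = (Z, W)`, `Y = fY(Z, U)` with `U ⫫ Z` and `W ⫫ Z`; the representation `ρ` is
injective on `Z`-values with extractor `ζ`; the predictor satisfies the selective
prediction property `P̂(y | r, (z', w')) = P(Y = y | Z = ζ(r), W = w')`.  Then
`∑ x', P̂(y | ρ(x), x') P(x') = P(y | do(X = x)) = P(fY x.1 U = y)`. -/
theorem stmt_8
    {𝒵 𝒲 ΩU ℛ 𝒴 : Type*} [Fintype 𝒵] [Fintype 𝒲] [Fintype ΩU]
    [DecidableEq 𝒴]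
    (p : 𝒵 → 𝒲 → ΩU → ℝ)   -- observational joint over (Z, W, U)
    (hp0 : ∀ z w u, 0 ≤ p z w u) (hp1 : ∑ z, ∑ w, ∑ u, p z w u = 1)
    (fY : 𝒵 → ΩU → 𝒴)
    -- marginals
    (Pz : 𝒵 → ℝ) (hPz : ∀ z, Pz z = ∑ w, ∑ u, p z w u)
    (Pw : 𝒲 → ℝ) (hPw : ∀ w, Pw w = ∑ z, ∑ u, p z w u)
    (PU : ΩU → ℝ) (hPU : ∀ u, PU u = ∑ z, ∑ w, p z w u)
    (Pzw : 𝒵 → 𝒲 → ℝ) (hPzw : ∀ z w, Pzw z w = ∑ u, p z w u)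
    (Pyzw : 𝒴 → 𝒵 → 𝒲 → ℝ)
    (hPyzw : ∀ y z w, Pyzw y z w = ∑ u, p z w u * (if fY z u = y then (1 : ℝ) else 0))
    -- independences: U ⫫ Z and W ⫫ Z
    (hUZ : ∀ z u, (∑ w, p z w u) = Pz z * PU u)
    (hWZ : ∀ z w, Pzw z w = Pz z * Pw w)
    -- sufficient representation: ρ injective on Z-values, ζ the extractor
    (ρ : 𝒵 × 𝒲 → ℛ) (ζ : ℛ → 𝒵)
    (hinj : ∀ z₁ w₁ z₂ w₂, z₁ ≠ z₂ → ρ (z₁, w₁) ≠ ρ (z₂, w₂))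
    (hζ : ∀ z w, ζ (ρ (z, w)) = z)
    -- selective prediction
    (Phat : 𝒴 → ℛ → 𝒵 × 𝒲 → ℝ)
    (hPhat : ∀ y r x', Phat y r x' = Pyzw y (ζ r) x'.2 / Pzw (ζ r) x'.2)
    (x : 𝒵 × 𝒲) (y : 𝒴)
    -- positivity of conditioning events
    (hpos : ∀ w', 0 < Pw w' → 0 < Pzw x.1 w') :
    (∑ x' : 𝒵 × 𝒲, Phat y (ρ x) x' * Pzw x'.1 x'.2) =
      ∑ u, PU u * (if fY x.1 u = y then (1 : ℝ) else 0) := by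
  have hζx : ζ (ρ x) = x.1 := by
    have h := hζ x.1 x.2
    simpa using h
  have hPwsum : ∑ w, Pw w = 1 := by
    simp_rw [hPw]
    rw [Finset.sum_comm]
    exact hp1
  have hPwnn : ∀ w, 0 ≤ Pw w := by
    intro w; rw [hPw]
    exact Finset.sum_nonneg fun z _ => Finset.sum_nonneg fun u _ => hp0 z w u
  have hzpos : 0 < Pz x.1 := by
    obtain ⟨w, hw⟩ : ∃ w, 0 < Pw w := by
      by_contra h
      push_neg at h
      have : ∑ w, Pw w ≤ 0 := Finset.sum_nonpos fun w _ => h w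
      linarith
    have h2 := hpos w hw
    rw [hWZ] at h2
    nlinarith
  rw [Fintype.sum_prod_type, Finset.sum_comm]
  have key : ∀ w', (∑ z', Phat y (ρ x) (z', w') * Pzw z' w')
      = Pyzw y x.1 w' / Pz x.1 := by
    intro w'
    have hsumz : ∑ z', Phat y (ρ x) (z', w') * Pzw z' w'
        = Pyzw y x.1 w' / Pzw x.1 w' * Pw w' := by
      simp_rw [hPhat, hζx]
      rw [← Finset.mul_sum]
      congr 1
      simp_rw [hPzw]
      rw [hPw]
    rw [hsumz]
    rcases (hPwnn w').lt_or_eq with hwpos | hw0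
    · have hwne : Pw w' ≠ 0 := ne_of_gt hwpos
      have hzne : Pz x.1 ≠ 0 := ne_of_gt hzpos
      rw [hWZ]
      field_simp
    · have hpz0 : Pzw x.1 w' = 0 := by rw [hWZ, ← hw0]; ring
      have hpy0 : Pyzw y x.1 w' = 0 := by
        have hall : ∀ u, p x.1 w' u = 0 := by
          intro u
          have h1 : ∑ u, p x.1 w' u = 0 := by rw [← hPzw]; exact hpz0
          have := (Finset.sum_eq_zero_iff_of_nonneg
            (fun u _ => hp0 x.1 w' u)).mp h1
          exact this u (Finset.mem_univ u)
        rw [hPyzw]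
        simp [hall]
      rw [hpy0, ← hw0]
      simp
  simp_rw [key, hPyzw]
  rw [← Finset.sum_div, Finset.sum_comm]
  simp_rw [← Finset.sum_mul, hUZ, mul_assoc, ← Finset.mul_sum,
    mul_div_assoc]
  rw [mul_div_cancel₀ _ (ne_of_gt hzpos)]
end

section
/- If the causal effect is used as classifier in the target domain, it achieves the same accuracy as the true target conditional whenever there is no confounding in the target: under the target SCM with X* ⫫ U_XY, argmax_y P(Y = y | do(X = x)) (computed in the source, which equals the same quantity in the target by transportability) equals argmax_y P*(Y = y | X = x) for all x with P*(X = x) > 0, assuming the argmax is unique. -/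
open Finset

/-- If the target domain is unconfounded (`X* ⫫ U_XY`), then the
classifier `argmax_y P(Y = y | do(X = x))` computed in the source (which equals the
target interventional distribution by transportability) coincides with
`argmax_y P*(Y = y | X = x)` at every `x` with `P*(X = x) > 0`, assuming the
argmax is unique. -/
theorem stmt_12
    {ΩX ΩXY 𝒳 𝒴 : Type*} [Fintype ΩX] [Fintype ΩXY] [Fintype 𝒴]
    [DecidableEq 𝒳] [DecidableEq 𝒴]
    (pUXY : ΩXY → ℝ) (pUX' : ΩX → ℝ)
    (fX' : ΩX → ΩXY → 𝒳) (fY : 𝒳 → ΩXY → 𝒴)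
    (hpUXY0 : ∀ u, 0 ≤ pUXY u) (hpUXY1 : ∑ u, pUXY u = 1)
    (hpUX'0 : ∀ u, 0 ≤ pUX' u) (hpUX'1 : ∑ u, pUX' u = 1)
    -- source interventional distribution (= target one by transportability)
    (doP : 𝒳 → 𝒴 → ℝ)
    (hdoP : ∀ x y, doP x y = ∑ u, pUXY u * (if fY x u = y then (1 : ℝ) else 0))
    -- target observational quantities
    (PX' : 𝒳 → ℝ)
    (hPX' : ∀ x, PX' x = ∑ ux, ∑ u, pUX' ux * pUXY u *
      (if fX' ux u = x then (1 : ℝ) else 0))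
    (PXU' : 𝒳 → ΩXY → ℝ)
    (hPXU' : ∀ x u, PXU' x u = ∑ ux, pUX' ux * pUXY u *
      (if fX' ux u = x then (1 : ℝ) else 0))
    -- no confounding in the target: X* ⫫ U_XY
    (hindep : ∀ x u, PXU' x u = PX' x * pUXY u)
    (PXY' : 𝒳 → 𝒴 → ℝ)
    (hPXY' : ∀ x y, PXY' x y = ∑ ux, ∑ u, pUX' ux * pUXY u *
      (if fX' ux u = x ∧ fY (fX' ux u) u = y then (1 : ℝ) else 0)) :
    ∀ x, 0 < PX' x → ∀ y : 𝒴,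
      (∀ y', y' ≠ y → doP x y' < doP x y) →
      (∀ y', y' ≠ y → PXY' x y' / PX' x < PXY' x y / PX' x) := by
  intro x hx y hmax y' hne
  have key : ∀ z, PXY' x z = PX' x * doP x z := by
    intro z
    rw [hPXY' x z, hdoP x z, Finset.mul_sum, Finset.sum_comm]
    refine Finset.sum_congr rfl fun u _ => ?_
    have h1 : ∀ ux, pUX' ux * pUXY u *
        (if fX' ux u = x ∧ fY (fX' ux u) u = z then (1:ℝ) else 0)
        = pUX' ux * pUXY u * (if fX' ux u = x then (1:ℝ) else 0) *
          (if fY x u = z then (1:ℝ) else 0) := by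
      intro ux
      by_cases h : fX' ux u = x
      · simp [h]
      · simp [h]
    rw [Finset.sum_congr rfl fun ux _ => h1 ux, ← Finset.sum_mul, ← hPXU' x u,
      hindep x u]
    ring
  have hne0 : PX' x ≠ 0 := ne_of_gt hx
  rw [key y', key y, mul_div_cancel_left₀ _ hne0, mul_div_cancel_left₀ _ hne0]
  exact hmax y' hne
end
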